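/- arXiv:1709.07663 — 5 statements merged into one kernel-verified Lean document; each statement's English description precedes it below -/
import Mathlib

section
/- For γ > 0, c > 0, d ≥ 1, the function p(x,t) = (Γ(γ + d/2)/(π^{d/2}Γ(γ))) (ct)^{-d} (1 - ‖x‖²/(ct)²)^{γ-1}, defined on the open region {(x,t) : t > 0, ‖x‖ < ct}, satisfies the Euler–Poisson–Darboux equation ∂²p/∂t² + ((d + 2γ - 1)/t) ∂p/∂t = c² Δp. -/
/-!
Write `p(x, t) = K · Φ(‖x‖², ct)` with `Φ(A, u) = u^(-d) (1 - A/u²)^(γ-1)`. The substitution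
`u = ct` turns the left-hand side into `c²` times the Euler–Poisson–Darboux operator in `u`, and
the Laplacian of a radial function `G(‖x‖²)` is `2d G' + 4‖x‖² G''`. Both first partial
derivatives of `Φ` are rational multiples of `Φ`, so the equation for `Φ` reduces to an identity
between rational functions of `u` and `A`.
-/

open Real

/-- Coordinatewise Laplacian of a function on `ℝ^d`. -/
noncomputable def laplacian {d : ℕ} (g : EuclideanSpace ℝ (Fin d) → ℝ)
    (x : EuclideanSpace ℝ (Fin d)) : ℝ :=
  ∑ i : Fin d, iteratedDeriv 2 (fun s : ℝ => g (x + s • EuclideanSpace.single i 1)) 0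

open Filter Topology

theorem iteratedDeriv_two_eq_of_hasDerivAt {f f' : ℝ → ℝ} {f'' t : ℝ}
    (hf : ∀ᶠ s in 𝓝 t, HasDerivAt f (f' s) s) (hf' : HasDerivAt f' f'' t) :
    iteratedDeriv 2 f t = f'' := by
  have hderiv : deriv f =ᶠ[𝓝 t] f' := hf.mono fun _ hs => hs.deriv
  rw [iteratedDeriv_succ, iteratedDeriv_one, hderiv.deriv_eq, hf'.deriv]

theorem iteratedDeriv_two_comp_mul_left {𝕜 : Type*} [NontriviallyNormedField 𝕜] {f : 𝕜 → 𝕜}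
    {c t : 𝕜} (hf : ContDiffAt 𝕜 2 f (c * t)) :
    iteratedDeriv 2 (fun s => f (c * s)) t = c ^ 2 * iteratedDeriv 2 f (c * t) := by
  have hlinear : iteratedDeriv 2 (c * ·) t = 0 := by simp [iteratedDeriv_succ]
  rw [← Function.comp_def, iteratedDeriv_comp_two hf (by fun_prop), hlinear]
  simp [mul_comm]

theorem EuclideanSpace.norm_add_smul_single_sq {d : ℕ} (x : EuclideanSpace ℝ (Fin d)) (i : Fin d)
    (s : ℝ) : ‖x + s • EuclideanSpace.single i 1‖ ^ 2 = ‖x‖ ^ 2 + 2 * x i * s + s ^ 2 := by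
  simp only [norm_add_sq_real, real_inner_smul_right, EuclideanSpace.inner_single_right,
    RCLike.conj_to_real, one_mul, norm_smul, norm_eq_abs, PiLp.norm_single, norm_one, mul_one, sq_abs]
  ring

theorem laplacian_comp_norm_sq {d : ℕ} {G : ℝ → ℝ} (x : EuclideanSpace ℝ (Fin d))
    (hG : ContDiffAt ℝ 2 G (‖x‖ ^ 2)) :
    laplacian (fun y => G (‖y‖ ^ 2)) x =
      2 * d * deriv G (‖x‖ ^ 2) + 4 * ‖x‖ ^ 2 * iteratedDeriv 2 G (‖x‖ ^ 2) := by
  have hcoord (i : Fin d) :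
      iteratedDeriv 2 (fun s : ℝ => G (‖x + s • EuclideanSpace.single i 1‖ ^ 2)) 0 =
        2 * deriv G (‖x‖ ^ 2) + 4 * x i ^ 2 * iteratedDeriv 2 G (‖x‖ ^ 2) := by
    let q (s : ℝ) : ℝ := ‖x‖ ^ 2 + 2 * x i * s + s ^ 2
    have hq (s : ℝ) : HasDerivAt q (2 * x i + 2 * s) s := by
      refine ((((hasDerivAt_id' s).const_mul (2 * x i)).const_add (‖x‖ ^ 2)).add
        (hasDerivAt_pow 2 s)).congr_deriv ?_
      ring
    have hq2 : iteratedDeriv 2 q 0 = 2 :=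
      iteratedDeriv_two_eq_of_hasDerivAt (.of_forall hq)
        (by simpa using ((hasDerivAt_id (0 : ℝ)).const_mul 2).const_add (2 * x i))
    have hq0 : q 0 = ‖x‖ ^ 2 := by simp [q]
    simp_rw [EuclideanSpace.norm_add_smul_single_sq]
    rw [← Function.comp_def G q, iteratedDeriv_comp_two (by rwa [hq0]) (by fun_prop), (hq 0).deriv,
      hq2, hq0]
    ring
  have hsum : ∑ i, x i ^ 2 = ‖x‖ ^ 2 := by simp [EuclideanSpace.norm_sq_eq]
  simp_rw [laplacian, hcoord, Finset.sum_add_distrib, ← Finset.sum_mul, ← Finset.mul_sum, hsum]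
  simp only [Finset.sum_const, Finset.card_univ, Fintype.card_fin, nsmul_eq_mul]
  ring

noncomputable def epdProfile (d γ A u : ℝ) : ℝ := u ^ (-d) * (1 - A / u ^ 2) ^ (γ - 1)

section EPDProfile

variable {d γ A u : ℝ}

theorem one_sub_div_sq_ne_zero (hu : u ≠ 0) (hA : A ≠ u ^ 2) : 1 - A / u ^ 2 ≠ 0 := by
  rw [sub_ne_zero, ne_comm, ne_eq, div_eq_one_iff_eq (pow_ne_zero 2 hu)]
  exact hA

theorem hasDerivAt_epdProfile_radial (hu : u ≠ 0) (hA : A ≠ u ^ 2) :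
    HasDerivAt (epdProfile d γ · u) (-(γ - 1) / (u ^ 2 - A) * epdProfile d γ A u) A := by
  have hw := one_sub_div_sq_ne_zero hu hA
  have hA' : u ^ 2 - A ≠ 0 := sub_ne_zero.mpr hA.symm
  have hpow := (((hasDerivAt_id' A).div_const (u ^ 2)).const_sub 1).rpow_const
    (p := γ - 1) (.inl hw)
  refine (hpow.const_mul (u ^ (-d))).congr_deriv ?_
  rw [epdProfile, rpow_sub_one hw (γ - 1)]
  field_simp

theorem hasDerivAt_epdProfile_time (hu : u ≠ 0) (hA : A ≠ u ^ 2) :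
    HasDerivAt (epdProfile d γ A)
      ((-d / u + 2 * (γ - 1) * A / (u * (u ^ 2 - A))) * epdProfile d γ A u) u := by
  have hw := one_sub_div_sq_ne_zero hu hA
  have hA' : u ^ 2 - A ≠ 0 := sub_ne_zero.mpr hA.symm
  have hfirst := (hasDerivAt_id' u).rpow_const (p := -d) (.inl hu)
  have hbase : HasDerivAt (fun v => 1 - A / v ^ 2) (2 * A / u ^ 3) u :=
    (((hasDerivAt_const u A).div (hasDerivAt_pow 2 u) (pow_ne_zero 2 hu)).const_sub 1).congr_deriv
      (by field_simp; ring)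
  have hsecond := hbase.rpow_const (p := γ - 1) (.inl hw)
  refine (hfirst.mul hsecond).congr_deriv ?_
  rw [epdProfile, rpow_sub_one hw (γ - 1), rpow_sub_one hu]
  generalize (1 - A / u ^ 2) ^ (γ - 1) = W
  generalize u ^ (-d) = U
  field_simp

theorem contDiffAt_epdProfile_radial (hu : u ≠ 0) (hA : A ≠ u ^ 2) :
    ContDiffAt ℝ 2 (epdProfile d γ · u) A := by
  have hw := one_sub_div_sq_ne_zero hu hA
  unfold epdProfile
  fun_prop (disch := assumption)

theorem contDiffAt_epdProfile_time (hu : u ≠ 0) (hA : A ≠ u ^ 2) :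
    ContDiffAt ℝ 2 (epdProfile d γ A) u := by
  have hw := one_sub_div_sq_ne_zero hu hA
  unfold epdProfile
  fun_prop (disch := first | assumption | positivity)

theorem epdProfile_radial_epd (hu : u ≠ 0) (hA : A ≠ u ^ 2) :
    iteratedDeriv 2 (epdProfile d γ A) u + (d + 2 * γ - 1) / u * deriv (epdProfile d γ A) u =
      2 * d * deriv (epdProfile d γ · u) A + 4 * A * iteratedDeriv 2 (epdProfile d γ · u) A := by
  have hA' : u ^ 2 - A ≠ 0 := sub_ne_zero.mpr hA.symm
  have radial : ∀ᶠ a in 𝓝 A, HasDerivAt (epdProfile d γ · u)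
      (-(γ - 1) / (u ^ 2 - a) * epdProfile d γ a u) a :=
    (eventually_ne_nhds hA).mono fun a ha => hasDerivAt_epdProfile_radial hu ha
  have time : ∀ᶠ v in 𝓝 u, HasDerivAt (epdProfile d γ A)
      ((-d / v + 2 * (γ - 1) * A / (v * (v ^ 2 - A))) * epdProfile d γ A v) v := by
    filter_upwards [eventually_ne_nhds hu,
      (continuous_pow 2).continuousAt.eventually_ne hA.symm] with v hv hvA
    exact hasDerivAt_epdProfile_time hv hvA.symm
  have radial_coeff : HasDerivAt (fun a => -(γ - 1) / (u ^ 2 - a))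
      (-(γ - 1) / (u ^ 2 - A) ^ 2) A :=
    ((hasDerivAt_const A (-(γ - 1))).div ((hasDerivAt_id' A).const_sub (u ^ 2))
      hA').congr_deriv (by field_simp; ring)
  have time_coeff : HasDerivAt (fun v => -d / v + 2 * (γ - 1) * A / (v * (v ^ 2 - A)))
      (d / u ^ 2 - 2 * (γ - 1) * A * (3 * u ^ 2 - A) / (u * (u ^ 2 - A)) ^ 2) u :=
    (((hasDerivAt_const u (-d)).div (hasDerivAt_id' u) hu).add
      ((hasDerivAt_const u (2 * (γ - 1) * A)).div
        ((hasDerivAt_id' u).mul ((hasDerivAt_pow 2 u).sub_const A))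
        (mul_ne_zero hu hA'))).congr_deriv
      (by simp only [Pi.mul_apply]; field_simp; ring)
  rw [iteratedDeriv_two_eq_of_hasDerivAt time (time_coeff.mul time.self_of_nhds),
    iteratedDeriv_two_eq_of_hasDerivAt radial (radial_coeff.mul radial.self_of_nhds),
    time.self_of_nhds.deriv, radial.self_of_nhds.deriv]
  generalize epdProfile d γ A u = Φ
  field_simp
  ring

end EPDProfile

theorem epd_fundamental_solution_solves_epd_general (d : ℕ)
    (γ c : ℝ)
    (p : EuclideanSpace ℝ (Fin d) → ℝ → ℝ)
    (hp : ∀ x s, p x s =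
      (Real.Gamma (γ + d / 2) / (Real.pi ^ ((d : ℝ) / 2) * Real.Gamma γ)) *
        (c * s) ^ (-(d : ℝ)) * (1 - ‖x‖ ^ 2 / (c * s) ^ 2) ^ (γ - 1))
    (x : EuclideanSpace ℝ (Fin d)) (t : ℝ) (hx : ‖x‖ < c * t) :
    iteratedDeriv 2 (fun s => p x s) t +
      ((d + 2 * γ - 1) / t) * deriv (fun s => p x s) t =
    c ^ 2 * laplacian (fun y => p y t) x := by
  set K := Real.Gamma (γ + d / 2) / (Real.pi ^ ((d : ℝ) / 2) * Real.Gamma γ)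
  have hct : 0 < c * t := (norm_nonneg x).trans_lt hx
  have hA : ‖x‖ ^ 2 ≠ (c * t) ^ 2 := (pow_lt_pow_left₀ hx (norm_nonneg x) two_ne_zero).ne
  have htime : (fun s => p x s) = fun s => K * epdProfile d γ (‖x‖ ^ 2) (c * s) := by
    funext s; rw [hp, epdProfile, mul_assoc]
  have hspace : (fun y => p y t) = fun y => K * epdProfile d γ (‖y‖ ^ 2) (c * t) := by
    funext y; rw [hp, epdProfile, mul_assoc]
  rw [htime, hspace, iteratedDeriv_const_mul_field, deriv_const_mul_field, deriv_comp_mul_left,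
    iteratedDeriv_two_comp_mul_left (contDiffAt_epdProfile_time hct.ne' hA),
    laplacian_comp_norm_sq (G := fun a => K * epdProfile d γ a (c * t)) x
      (contDiffAt_const.mul (contDiffAt_epdProfile_radial hct.ne' hA)),
    deriv_const_mul_field, iteratedDeriv_const_mul_field]
  have hscale : (d + 2 * γ - 1) / t * c = c ^ 2 * ((d + 2 * γ - 1) / (c * t)) := by
    field_simp [left_ne_zero_of_mul hct.ne']
  linear_combination K * c ^ 2 * epdProfile_radial_epd (d := d) (γ := γ) hct.ne' hA +
    K * deriv (epdProfile d γ (‖x‖ ^ 2)) (c * t) * hscale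

/-- The fundamental solution of the Euler–Poisson–Darboux equation satisfies
`∂²p/∂t² + ((d+2γ-1)/t) ∂p/∂t = c² Δp` on the region `{t > 0, ‖x‖ < ct}`. -/
theorem epd_fundamental_solution_solves_epd (d : ℕ) (hd : 1 ≤ d)
    (γ c : ℝ) (hγ : 0 < γ) (hc : 0 < c)
    (p : EuclideanSpace ℝ (Fin d) → ℝ → ℝ)
    (hp : ∀ x s, p x s =
      (Real.Gamma (γ + d / 2) / (Real.pi ^ ((d : ℝ) / 2) * Real.Gamma γ)) *
        (c * s) ^ (-(d : ℝ)) * (1 - ‖x‖ ^ 2 / (c * s) ^ 2) ^ (γ - 1))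
    (x : EuclideanSpace ℝ (Fin d)) (t : ℝ) (ht : 0 < t) (hx : ‖x‖ < c * t) :
    iteratedDeriv 2 (fun s => p x s) t +
      ((d + 2 * γ - 1) / t) * deriv (fun s => p x s) t =
    c ^ 2 * laplacian (fun y => p y t) x :=
  epd_fundamental_solution_solves_epd_general d γ c p hp x t hx
end

section
/- Let m > 1 and d ≥ 1, and set β = 1/(2+d(m-1)), B = (m-1)/(2m(2+d(m-1))), c' = 1/√B. Under the time change t' = t^β, the Barenblatt solution u(x,t) = C t^{-α}(1 - B‖x‖²/t^{2β})₊^{1/(m-1)} equals (Γ(d/2 + m/(m-1))/(Γ(m/(m-1)) π^{d/2})) (c't')^{-d} (1 - ‖x‖²/(c't')²)₊^{1/(m-1)}, which is the fundamental EPD solution with parameter γ = m/(m-1) and speed c'. -/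
open Real

/-- Under the time change `t' = t^β` with speed `c' = 1/√B`, the Barenblatt
solution of the PME coincides with the fundamental EPD solution with parameter
`γ = m/(m-1)` and speed `c'`. -/
theorem barenblatt_eq_epd_after_time_change (d : ℕ) (hd : 1 ≤ d) (m : ℝ)
    (hm : 1 < m) (t : ℝ) (ht : 0 < t) (x : EuclideanSpace ℝ (Fin d))
    (α β B c' t' : ℝ)
    (hα : α = (d : ℝ) / (2 + d * (m - 1)))
    (hβ : β = 1 / (2 + d * (m - 1)))
    (hB : B = (m - 1) / (2 * m * (2 + d * (m - 1))))
    (hc' : c' = 1 / Real.sqrt B)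
    (ht' : t' = t ^ β) :
    (Real.Gamma (d / 2 + m / (m - 1)) * B ^ ((d : ℝ) / 2) /
        (Real.Gamma (m / (m - 1)) * Real.pi ^ ((d : ℝ) / 2))) *
      t ^ (-α) * (max (1 - B * ‖x‖ ^ 2 / t ^ (2 * β)) 0) ^ (1 / (m - 1)) =
    (Real.Gamma (d / 2 + m / (m - 1)) /
        (Real.Gamma (m / (m - 1)) * Real.pi ^ ((d : ℝ) / 2))) *
      (c' * t') ^ (-(d : ℝ)) *
      (max (1 - ‖x‖ ^ 2 / (c' * t') ^ 2) 0) ^ (1 / (m - 1)) := by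
  have hden : (0:ℝ) < 2 + d * (m - 1) := by
    have h1 : (0:ℝ) ≤ (d : ℝ) * (m - 1) :=
      mul_nonneg (Nat.cast_nonneg d) (by linarith)
    linarith
  have hB0 : 0 < B := by
    rw [hB]
    apply div_pos (by linarith)
    positivity
  have hsB : 0 < Real.sqrt B := Real.sqrt_pos.mpr hB0
  have ht2β : (0:ℝ) < t ^ (2 * β) := Real.rpow_pos_of_pos ht _
  have hct : c' * t' = t ^ β / Real.sqrt B := by
    rw [hc', ht']; ring
  -- square of c' * t'
  have hsq : (c' * t') ^ 2 = t ^ (2 * β) / B := by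
    rw [hct, div_pow, Real.sq_sqrt hB0.le, ← Real.rpow_natCast (t ^ β) 2,
      ← Real.rpow_mul ht.le]
    norm_num [mul_comm]
  -- the rpow of c' * t'
  have hpow : (c' * t') ^ (-(d:ℝ)) = B ^ ((d:ℝ)/2) * t ^ (-α) := by
    rw [hct, div_eq_mul_inv, ← Real.rpow_neg_one (Real.sqrt B),
      Real.mul_rpow (Real.rpow_nonneg ht.le β) (Real.rpow_nonneg (Real.sqrt_nonneg B) (-1))]
    rw [Real.sqrt_eq_rpow, ← Real.rpow_mul hB0.le, ← Real.rpow_mul hB0.le,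
      ← Real.rpow_mul ht.le]
    have h1 : β * -(d:ℝ) = -α := by
      rw [hα, hβ]; field_simp
    have h2 : 1 / 2 * (-1:ℝ) * -(d:ℝ) = (d:ℝ) / 2 := by ring
    rw [h1, h2, mul_comm]
  -- the max arguments agree
  have hmax : 1 - B * ‖x‖ ^ 2 / t ^ (2 * β) = 1 - ‖x‖ ^ 2 / (c' * t') ^ 2 := by
    rw [hsq, div_div_eq_mul_div]
    ring
  rw [hmax, hpow]
  ring
end

section
/- For b > 0 and real ν, μ with ν > -1, μ > -1, ∫₀¹ x^{ν+1}(1-x²)^μ J_ν(bx) dx = 2^μ Γ(μ+1) b^{-(μ+1)} J_{ν+μ+1}(b). -/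
open Real MeasureTheory Set

lemma realBeta {p q : ℝ} (hp : 0 < p) (hq : 0 < q) :
    ∫ x in (0:ℝ)..1, x ^ (p - 1) * (1 - x) ^ (q - 1) =
      Real.Gamma p * Real.Gamma q / Real.Gamma (p + q) := by
  have key := Complex.Gamma_mul_Gamma_eq_betaIntegral (s := (p:ℂ)) (t := (q:ℂ))
    (by simpa using hp) (by simpa using hq)
  have hB : Complex.betaIntegral p q =
      ((∫ x in (0:ℝ)..1, x ^ (p - 1) * (1 - x) ^ (q - 1) : ℝ) : ℂ) := by
    rw [Complex.betaIntegral, ← intervalIntegral.integral_ofReal]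
    apply intervalIntegral.integral_congr
    intro x hx
    rw [uIcc_of_le zero_le_one] at hx
    show (x:ℂ) ^ ((p:ℂ) - 1) * (1 - (x:ℂ)) ^ ((q:ℂ) - 1) = ((x ^ (p - 1) * (1 - x) ^ (q - 1) : ℝ) : ℂ)
    rw [show ((p:ℂ) - 1) = ((p - 1 : ℝ) : ℂ) by push_cast; ring,
      show ((q:ℂ) - 1) = ((q - 1 : ℝ) : ℂ) by push_cast; ring,
      show (1 - (x:ℂ)) = ((1 - x : ℝ) : ℂ) by push_cast; ring,
      ← Complex.ofReal_cpow hx.1, ← Complex.ofReal_cpow (by linarith [hx.2] : (0:ℝ) ≤ 1 - x),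
      ← Complex.ofReal_mul]
  rw [hB, Complex.Gamma_ofReal, Complex.Gamma_ofReal, ← Complex.ofReal_add,
    Complex.Gamma_ofReal, ← Complex.ofReal_mul, ← Complex.ofReal_mul] at key
  have := Complex.ofReal_inj.mp key
  have hne : Real.Gamma (p + q) ≠ 0 := (Real.Gamma_pos_of_pos (by linarith)).ne'
  field_simp
  linarith [this]

lemma beta_integrableOn {p q : ℝ} (hp : 0 < p) (hq : 0 < q) :
    IntegrableOn (fun x : ℝ => x ^ (p - 1) * (1 - x) ^ (q - 1)) (Ioo 0 1) := by
  have h := Complex.betaIntegral_convergent (u := (p:ℂ)) (v := (q:ℂ))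
    (by simpa using hp) (by simpa using hq)
  rw [intervalIntegrable_iff_integrableOn_Ioo_of_le zero_le_one] at h
  have h2 := h.re
  apply MeasureTheory.IntegrableOn.congr_fun h2 _ measurableSet_Ioo
  intro x hx
  have e1 : ((x:ℂ)) ^ ((p:ℂ) - 1) = ((x ^ (p - 1) : ℝ) : ℂ) := by
    rw [show ((p:ℂ) - 1) = ((p - 1 : ℝ) : ℂ) by push_cast; ring, ← Complex.ofReal_cpow hx.1.le]
  have e2 : (1 - (x:ℂ)) ^ ((q:ℂ) - 1) = (((1 - x) ^ (q - 1) : ℝ) : ℂ) := by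
    rw [show ((q:ℂ) - 1) = ((q - 1 : ℝ) : ℂ) by push_cast; ring,
      show (1 - (x:ℂ)) = ((1 - x : ℝ) : ℂ) by push_cast; ring,
      ← Complex.ofReal_cpow (by linarith [hx.2] : (0:ℝ) ≤ 1 - x)]
  simp [e1, e2, ← Complex.ofReal_mul]

lemma sq_image : (fun x : ℝ => x ^ 2) '' Ioo 0 1 = Ioo 0 1 := by
  ext y
  constructor
  · rintro ⟨x, ⟨hx0, hx1⟩, rfl⟩
    refine ⟨by positivity, ?_⟩
    show x ^ 2 < 1
    nlinarith
  · rintro ⟨hy0, hy1⟩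
    refine ⟨Real.sqrt y, ⟨Real.sqrt_pos.mpr hy0, ?_⟩, Real.sq_sqrt hy0.le⟩
    nlinarith [Real.sq_sqrt hy0.le, Real.sqrt_nonneg y]

lemma sq_deriv : ∀ x ∈ Ioo (0:ℝ) 1, HasDerivWithinAt (fun x : ℝ => x ^ 2) (2 * x) (Ioo 0 1) x := by
  intro x _
  simpa using (hasDerivAt_pow 2 x).hasDerivWithinAt

lemma sq_injOn : InjOn (fun x : ℝ => x ^ 2) (Ioo 0 1) := by
  intro x hx y hy h
  simp only at h
  nlinarith [hx.1, hy.1]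

lemma sq_point {p q x : ℝ} (hx : x ∈ Ioo (0:ℝ) 1) :
    |2 * x| • ((x ^ 2) ^ (p - 1) * (1 - x ^ 2) ^ (q + 1 - 1)) =
      2 * (x ^ (2 * p - 1) * (1 - x ^ 2) ^ q) := by
  have hx0 := hx.1
  have h1 : ((x ^ 2 : ℝ)) ^ (p - 1) = x ^ (2 * (p - 1)) := by
    rw [← Real.rpow_natCast x 2, ← Real.rpow_mul hx0.le]
    norm_num
  have h2 : x * x ^ (2 * (p - 1)) = x ^ (2 * p - 1) := by
    nth_rewrite 1 [← Real.rpow_one x]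
    rw [← Real.rpow_add hx0]
    ring_nf
  rw [smul_eq_mul, abs_of_pos (by linarith), add_sub_cancel_right, h1]
  linear_combination (2 * (1 - x ^ 2) ^ q) * h2

lemma beta_sq_integrable {p q : ℝ} (hp : 0 < p) (hq : -1 < q) :
    IntegrableOn (fun x : ℝ => x ^ (2 * p - 1) * (1 - x ^ 2) ^ q) (Ioo 0 1) := by
  have h := beta_integrableOn hp (by linarith : (0:ℝ) < q + 1)
  rw [← sq_image,
    integrableOn_image_iff_integrableOn_abs_deriv_smul measurableSet_Ioo sq_deriv sq_injOn] at h
  have h2 : IntegrableOn (fun x : ℝ => 2 * (x ^ (2 * p - 1) * (1 - x ^ 2) ^ q)) (Ioo 0 1) := by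
    apply h.congr_fun _ measurableSet_Ioo
    intro x hx
    exact sq_point (p := p) (q := q) hx
  have h3 := h2.const_mul (2⁻¹ : ℝ)
  have : (fun x : ℝ => (2⁻¹ : ℝ) * (2 * (x ^ (2 * p - 1) * (1 - x ^ 2) ^ q))) =
      fun x : ℝ => x ^ (2 * p - 1) * (1 - x ^ 2) ^ q := by
    funext x; ring
  rwa [this] at h3

lemma beta_sq_integral {p q : ℝ} (hp : 0 < p) (hq : -1 < q) :
    ∫ x in Ioo (0:ℝ) 1, x ^ (2 * p - 1) * (1 - x ^ 2) ^ q =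
      Real.Gamma p * Real.Gamma (q + 1) / (2 * Real.Gamma (p + q + 1)) := by
  have hq1 : (0:ℝ) < q + 1 := by linarith
  have h := integral_image_eq_integral_abs_deriv_smul measurableSet_Ioo sq_deriv sq_injOn
    (fun u : ℝ => u ^ (p - 1) * (1 - u) ^ (q + 1 - 1))
  rw [sq_image] at h
  have h2 : (∫ x in Ioo (0:ℝ) 1, |2 * x| • ((x ^ 2) ^ (p - 1) * (1 - x ^ 2) ^ (q + 1 - 1)))
      = 2 * ∫ x in Ioo (0:ℝ) 1, x ^ (2 * p - 1) * (1 - x ^ 2) ^ q := by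
    rw [← integral_const_mul]
    apply setIntegral_congr_fun measurableSet_Ioo
    intro x hx
    exact sq_point hx
  have h3 : (∫ u in Ioo (0:ℝ) 1, u ^ (p - 1) * (1 - u) ^ (q + 1 - 1))
      = Real.Gamma p * Real.Gamma (q + 1) / Real.Gamma (p + q + 1) := by
    rw [← MeasureTheory.integral_Ioc_eq_integral_Ioo,
      ← intervalIntegral.integral_of_le zero_le_one, realBeta hp hq1,
      show p + (q + 1) = p + q + 1 by ring]
  rw [h3, h2] at h
  have hg := (Real.Gamma_pos_of_pos (by linarith : (0:ℝ) < p + q + 1)).ne'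
  field_simp at h ⊢
  linarith

/-- The Bessel function of the first kind of (real) order `μ`. -/
noncomputable def besselJ (μ : ℝ) (x : ℝ) : ℝ :=
  ∑' k : ℕ, (-1 : ℝ) ^ k * (x / 2) ^ (2 * (k : ℝ) + μ) /
    (Nat.factorial k * Real.Gamma ((k : ℝ) + μ + 1))

noncomputable def bc (b ν : ℝ) (k : ℕ) : ℝ :=
  (-1 : ℝ) ^ k * (b / 2) ^ (2 * (k : ℝ) + ν) /
    (Nat.factorial k * Real.Gamma ((k : ℝ) + ν + 1))

noncomputable def bF (b ν μ : ℝ) (k : ℕ) (x : ℝ) : ℝ :=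
  bc b ν k * (x ^ (2 * ((k : ℝ) + ν + 1) - 1) * (1 - x ^ 2) ^ μ)

set_option maxHeartbeats 1000000 in
/-- Gradshteyn–Ryzhik 6.567(1): for `b > 0`, `ν > -1`, `μ > -1`,
`∫₀¹ x^{ν+1}(1-x²)^μ J_ν(bx) dx = 2^μ Γ(μ+1) b^{-(μ+1)} J_{ν+μ+1}(b)`. -/
theorem besselJ_weighted_integral (b ν μ : ℝ) (hb : 0 < b)
    (hν : -1 < ν) (hμ : -1 < μ) :
    ∫ x in (0 : ℝ)..1, x ^ (ν + 1) * (1 - x ^ 2) ^ μ * besselJ ν (b * x) =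
      2 ^ μ * Real.Gamma (μ + 1) * b ^ (-(μ + 1)) * besselJ (ν + μ + 1) b := by
  have hp : ∀ k : ℕ, (0:ℝ) < (k : ℝ) + ν + 1 := by
    intro k
    have : (0:ℝ) ≤ (k : ℝ) := Nat.cast_nonneg k
    linarith
  have hΓ1 : ∀ k : ℕ, (0:ℝ) < Real.Gamma ((k : ℝ) + ν + 1) :=
    fun k => Real.Gamma_pos_of_pos (hp k)
  have hΓ2 : ∀ k : ℕ, (0:ℝ) < Real.Gamma ((k : ℝ) + ν + 1 + μ + 1) :=
    fun k => Real.Gamma_pos_of_pos (by linarith [hp k])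
  have hΓμ : (0:ℝ) < Real.Gamma (μ + 1) := Real.Gamma_pos_of_pos (by linarith)
  have hInt : ∀ k : ℕ, Integrable (bF b ν μ k) (volume.restrict (Ioo 0 1)) := by
    intro k
    exact (beta_sq_integrable (hp k) hμ).const_mul (bc b ν k)
  have hIval : ∀ k : ℕ, ∫ x in Ioo (0:ℝ) 1, bF b ν μ k x =
      bc b ν k * (Real.Gamma ((k : ℝ) + ν + 1) * Real.Gamma (μ + 1) /
        (2 * Real.Gamma ((k : ℝ) + ν + 1 + μ + 1))) := by
    intro k
    simp only [bF]
    rw [integral_const_mul, beta_sq_integral (hp k) hμ]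
  have hcabs : ∀ k : ℕ, |bc b ν k| =
      (b / 2) ^ (2 * (k : ℝ) + ν) / (Nat.factorial k * Real.Gamma ((k : ℝ) + ν + 1)) := by
    intro k
    have hfg : (0:ℝ) < (Nat.factorial k : ℝ) * Real.Gamma ((k : ℝ) + ν + 1) :=
      mul_pos (by positivity) (hΓ1 k)
    rw [bc, abs_div, abs_mul, abs_pow, abs_neg, abs_one, one_pow, one_mul,
      abs_of_pos (Real.rpow_pos_of_pos (by linarith) _), abs_of_pos hfg]
  have hNorm : ∀ k : ℕ, (∫ x in Ioo (0:ℝ) 1, ‖bF b ν μ k x‖) =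
      |bc b ν k| * (Real.Gamma ((k : ℝ) + ν + 1) * Real.Gamma (μ + 1) /
        (2 * Real.Gamma ((k : ℝ) + ν + 1 + μ + 1))) := by
    intro k
    rw [setIntegral_congr_fun measurableSet_Ioo
      (g := fun x : ℝ => |bc b ν k| * (x ^ (2 * ((k : ℝ) + ν + 1) - 1) * (1 - x ^ 2) ^ μ)) ?_,
      integral_const_mul, beta_sq_integral (hp k) hμ]
    intro x hx
    have hx2 : (0:ℝ) < 1 - x ^ 2 := by nlinarith [hx.1, hx.2]
    have hx1 := hx.1
    simp only [bF]
    rw [Real.norm_eq_abs, abs_mul]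
    congr 1
    · exact abs_of_pos (by positivity)
  have hSum : Summable (fun k : ℕ => ∫ x in Ioo (0:ℝ) 1, ‖bF b ν μ k x‖) := by
    have hT : ∀ k : ℕ, |bc b ν k| * (Real.Gamma ((k : ℝ) + ν + 1) * Real.Gamma (μ + 1) /
        (2 * Real.Gamma ((k : ℝ) + ν + 1 + μ + 1))) =
        ((b / 2) ^ 2) ^ k * (b / 2) ^ ν * Real.Gamma (μ + 1) /
          (2 * Nat.factorial k * Real.Gamma ((k : ℝ) + ν + 1 + μ + 1)) := by
      intro k
      rw [hcabs k, show (b / 2) ^ (2 * (k : ℝ) + ν) = ((b / 2) ^ 2) ^ k * (b / 2) ^ ν by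
        rw [Real.rpow_add (by linarith), show (2 * (k : ℝ)) = ((2 * k : ℕ) : ℝ) by push_cast; ring,
          Real.rpow_natCast, pow_mul]]
      have h1 := (hΓ1 k).ne'
      have h2 := (hΓ2 k).ne'
      have h3 : (Nat.factorial k : ℝ) ≠ 0 := by positivity
      field_simp
    obtain ⟨N, hN⟩ := exists_nat_ge (1 - (ν + μ))
    have hbound : ∀ k : ℕ, N ≤ k →
        ((b / 2) ^ 2) ^ k * (b / 2) ^ ν * Real.Gamma (μ + 1) /
          (2 * Nat.factorial k * Real.Gamma ((k : ℝ) + ν + 1 + μ + 1)) ≤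
        ((b / 2) ^ 2) ^ k / Nat.factorial k * ((b / 2) ^ ν * Real.Gamma (μ + 1) / 2) := by
      intro k hk
      have hge : (2:ℝ) ≤ (k : ℝ) + ν + 1 + μ + 1 := by
        have : (N : ℝ) ≤ (k : ℝ) := Nat.cast_le.mpr hk
        linarith
      have hΓge : (1:ℝ) ≤ Real.Gamma ((k : ℝ) + ν + 1 + μ + 1) := by
        have := Real.Gamma_strictMonoOn_Ici.monotoneOn (by norm_num : (2:ℝ) ∈ Ici 2)
          (mem_Ici.mpr hge) hge
        rwa [Real.Gamma_two] at this
      have hnum : (0:ℝ) ≤ ((b / 2) ^ 2) ^ k * (b / 2) ^ ν * Real.Gamma (μ + 1) := by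
        have h4 : (0:ℝ) < (b / 2) ^ ν := Real.rpow_pos_of_pos (by linarith) _
        positivity
      have hfac : (0:ℝ) < (Nat.factorial k : ℝ) := by positivity
      rw [show ((b / 2) ^ 2) ^ k / (Nat.factorial k : ℝ) *
          ((b / 2) ^ ν * Real.Gamma (μ + 1) / 2) =
          ((b / 2) ^ 2) ^ k * (b / 2) ^ ν * Real.Gamma (μ + 1) /
            (2 * Nat.factorial k * 1) by ring]
      gcongr
    have hnn : ∀ k : ℕ, (0:ℝ) ≤
        ((b / 2) ^ 2) ^ k * (b / 2) ^ ν * Real.Gamma (μ + 1) /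
          (2 * Nat.factorial k * Real.Gamma ((k : ℝ) + ν + 1 + μ + 1)) := by
      intro k
      have h4 : (0:ℝ) < (b / 2) ^ ν := Real.rpow_pos_of_pos (by linarith) _
      have hfac : (0:ℝ) < (Nat.factorial k : ℝ) := by positivity
      exact div_nonneg (by positivity) (mul_pos (mul_pos two_pos hfac) (hΓ2 k)).le
    have hg : Summable (fun k : ℕ => ((b / 2) ^ 2) ^ k / (Nat.factorial k : ℝ) *
        ((b / 2) ^ ν * Real.Gamma (μ + 1) / 2)) :=
      (Real.summable_pow_div_factorial _).mul_right _
    have hTsum : Summable (fun k : ℕ =>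
        ((b / 2) ^ 2) ^ k * (b / 2) ^ ν * Real.Gamma (μ + 1) /
          (2 * Nat.factorial k * Real.Gamma ((k : ℝ) + ν + 1 + μ + 1))) := by
      rw [← summable_nat_add_iff N]
      exact Summable.of_nonneg_of_le (fun k => hnn (k + N))
        (fun k => hbound (k + N) (Nat.le_add_left N k))
        ((summable_nat_add_iff N).mpr hg)
    refine Summable.congr ?_ (fun k => (hNorm k).symm)
    exact Summable.congr hTsum (fun k => (hT k).symm)
  have step1 : ∫ x in Ioo (0:ℝ) 1, x ^ (ν + 1) * (1 - x ^ 2) ^ μ * besselJ ν (b * x) =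
      ∫ x in Ioo (0:ℝ) 1, ∑' k : ℕ, bF b ν μ k x := by
    apply setIntegral_congr_fun measurableSet_Ioo
    intro x hx
    simp only [besselJ]
    rw [← tsum_mul_left]
    apply tsum_congr
    intro k
    have h1 : (b * x / 2) ^ (2 * (k:ℝ) + ν) = (b / 2) ^ (2 * (k:ℝ) + ν) * x ^ (2 * (k:ℝ) + ν) := by
      rw [show b * x / 2 = b / 2 * x by ring, Real.mul_rpow (by linarith) hx.1.le]
    have h2 : x ^ (ν + 1) * x ^ (2 * (k:ℝ) + ν) = x ^ (2 * ((k:ℝ) + ν + 1) - 1) := by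
      rw [← Real.rpow_add hx.1]
      ring_nf
    simp only [bF, bc]
    rw [h1]
    linear_combination ((-1:ℝ) ^ k * (b / 2) ^ (2 * (k:ℝ) + ν) * (1 - x ^ 2) ^ μ /
      ((Nat.factorial k : ℝ) * Real.Gamma ((k:ℝ) + ν + 1))) * h2
  have final : ∀ k : ℕ, bc b ν k * (Real.Gamma ((k : ℝ) + ν + 1) * Real.Gamma (μ + 1) /
      (2 * Real.Gamma ((k : ℝ) + ν + 1 + μ + 1))) =
      2 ^ μ * Real.Gamma (μ + 1) * b ^ (-(μ + 1)) *
        ((-1:ℝ) ^ k * (b / 2) ^ (2 * (k:ℝ) + (ν + μ + 1)) /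
          (Nat.factorial k * Real.Gamma ((k:ℝ) + (ν + μ + 1) + 1))) := by
    intro k
    have e1 : ((k:ℝ) + (ν + μ + 1) + 1) = ((k:ℝ) + ν + 1 + μ + 1) := by ring
    have e2 : (b / 2) ^ (2 * (k:ℝ) + (ν + μ + 1)) =
        (b / 2) ^ (2 * (k:ℝ) + ν) * (b / 2) ^ (μ + 1) := by
      rw [← Real.rpow_add (by linarith)]
      ring_nf
    have e3 : ((b / 2 : ℝ)) ^ (μ + 1) = b ^ (μ + 1) / 2 ^ (μ + 1) :=
      Real.div_rpow hb.le (by norm_num) _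
    have e4 : (2:ℝ) ^ (μ + 1) = 2 ^ μ * 2 := by
      rw [Real.rpow_add (by norm_num), Real.rpow_one]
    have e5 : b ^ (-(μ + 1)) = (b ^ (μ + 1))⁻¹ := Real.rpow_neg hb.le _
    rw [e1, e2, e3, e4, e5, bc]
    have n1 := (hΓ1 k).ne'
    have n2 := (hΓ2 k).ne'
    have n3 : (Nat.factorial k : ℝ) ≠ 0 := by positivity
    have n4 : b ^ (μ + 1) ≠ 0 := (Real.rpow_pos_of_pos hb _).ne'
    have n5 : (2:ℝ) ^ μ ≠ 0 := (Real.rpow_pos_of_pos (by norm_num) _).ne'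
    field_simp
  rw [intervalIntegral.integral_of_le zero_le_one, MeasureTheory.integral_Ioc_eq_integral_Ioo,
    step1, ← MeasureTheory.integral_tsum_of_summable_integral_norm hInt hSum]
  simp only [besselJ]
  rw [← tsum_mul_left]
  exact tsum_congr (fun k => (hIval k).trans (final k))
end

section
/- For γ > 0, c > 0, d ≥ 1 and ξ ∈ ℝ^d, ξ ≠ 0, the function û_ν(ξ,t) = (2/(ct‖ξ‖^{ν/2}))^{γ+d/2-1} Γ(γ+d/2) J_{γ+d/2-1}(ct‖ξ‖^{ν/2}) satisfies the ODE in t: ∂²û/∂t² + ((d+2γ-1)/t) ∂û/∂t = -c²‖ξ‖^ν û, for any ν > 0. -/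
open Real

/-!
Write `(2 / x) ^ μ * J_μ(x) = h(x²)` with the entire series `h z = ∑ bₖ zᵏ`, where
`bₖ = (-1)ᵏ / (k! Γ(k + μ + 1) 4ᵏ)`. The recurrence `4 (k + 1) (k + μ + 1) bₖ₊₁ = -bₖ` says
exactly that `z h'' + (μ + 1) h' = -h / 4`. Since `û(t) = Γ(μ + 1) h((a t)²)` with
`a = c ‖ξ‖^(ν/2)` and `μ = γ + d/2 - 1`, the substitution `z = (a t)²` turns this into
`û'' + ((2μ + 1) / t) û' = -a² û`.
-/

open Filter Topology

def derivCoeff (a : ℕ → ℝ) (n : ℕ) : ℝ := (n + 1) * a (n + 1)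

section EntireSeries

variable {a : ℕ → ℝ}

lemma summable_derivCoeff_mul_pow (ha : ∀ x, Summable fun n => a n * x ^ n) (x : ℝ) :
    Summable fun n => derivCoeff a n * x ^ n := by
  set R := 2 * (|x| + 1)
  have hR : Summable fun n => |a (n + 1) * R ^ (n + 1)| :=
    (summable_nat_add_iff 1).2 (ha R).abs
  refine hR.of_norm_bounded fun n => ?_
  have hn : ((n : ℝ) + 1) ≤ 2 ^ n := by exact_mod_cast Nat.lt_two_pow_self
  have hx : |x| ^ n ≤ (|x| + 1) ^ n := pow_le_pow_left₀ (abs_nonneg x) (by linarith) n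
  have hR1 : (1 : ℝ) ≤ R := by linarith [abs_nonneg x]
  calc ‖derivCoeff a n * x ^ n‖ = |a (n + 1)| * (((n : ℝ) + 1) * |x| ^ n) := by
        rw [derivCoeff, Real.norm_eq_abs, abs_mul, abs_mul, abs_pow,
          abs_of_nonneg (by positivity : (0 : ℝ) ≤ n + 1)]
        ring
    _ ≤ |a (n + 1)| * R ^ (n + 1) := by
        gcongr
        calc ((n : ℝ) + 1) * |x| ^ n ≤ 2 ^ n * (|x| + 1) ^ n := by gcongr
          _ = R ^ n := by rw [← mul_pow]
          _ ≤ R ^ (n + 1) := pow_le_pow_right₀ hR1 n.le_succ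
    _ = |a (n + 1) * R ^ (n + 1)| := by
        rw [abs_mul, abs_pow, abs_of_pos (by positivity : (0 : ℝ) < R)]

lemma hasDerivAt_tsum_mul_pow (ha : ∀ x, Summable fun n => a n * x ^ n) (x : ℝ) :
    HasDerivAt (fun y => ∑' n, a n * y ^ n) (∑' n, derivCoeff a n * x ^ n) x := by
  have hshift : (fun y => ∑' n, a n * y ^ n) = fun y => a 0 + ∑' n, a (n + 1) * y ^ (n + 1) := by
    funext y
    rw [(ha y).tsum_eq_zero_add, pow_zero, mul_one]
  rw [hshift]
  refine HasDerivAt.const_add _ ?_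
  have hR : 0 < |x| + 1 := by positivity
  refine hasDerivAt_tsum_of_isPreconnected (summable_derivCoeff_mul_pow ha (|x| + 1)).abs
    Metric.isOpen_ball (convex_ball 0 (|x| + 1)).isPreconnected
    (g := fun n y => a (n + 1) * y ^ (n + 1)) (g' := fun n y => derivCoeff a n * y ^ n)
    (fun n y _ => ?_) (fun n y hy => ?_) (y₀ := x) ?_ ((summable_nat_add_iff 1).2 (ha x)) ?_
  · refine ((hasDerivAt_pow (n + 1) y).const_mul (a (n + 1))).congr_deriv ?_
    simp only [derivCoeff, add_tsub_cancel_right, Nat.cast_add, Nat.cast_one]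
    ring
  · rw [mem_ball_zero_iff, Real.norm_eq_abs] at hy
    rw [Real.norm_eq_abs, abs_mul, abs_mul, abs_pow, abs_pow, abs_of_pos hR]
    gcongr
  · simp
  · simp

lemma hasSum_mul_tsum_derivCoeff_derivCoeff_add (ha : ∀ x, Summable fun n => a n * x ^ n)
    (β x : ℝ) :
    HasSum (fun n => (n + 1) * (n + β) * a (n + 1) * x ^ n)
      (x * ∑' n, derivCoeff (derivCoeff a) n * x ^ n + β * ∑' n, derivCoeff a n * x ^ n) := by
  have ha' := summable_derivCoeff_mul_pow ha
  have hfirst : HasSum (fun n => n * (n + 1) * a (n + 1) * x ^ n)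
      (x * ∑' n, derivCoeff (derivCoeff a) n * x ^ n) := by
    refine (hasSum_nat_add_iff' 1).1 ?_
    rw [Finset.sum_range_one, Nat.cast_zero, zero_mul, zero_mul, zero_mul, sub_zero]
    refine ((summable_derivCoeff_mul_pow ha' x).hasSum.mul_left x).congr_fun fun n => ?_
    simp only [derivCoeff, Nat.cast_add, Nat.cast_one]
    ring
  refine (hfirst.add ((ha' x).hasSum.mul_left β)).congr_fun fun n => ?_
  simp only [derivCoeff]
  ring

end EntireSeries

open scoped Nat

noncomputable def besselCoeff (μ : ℝ) (k : ℕ) : ℝ :=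
  (-1) ^ k / (k ! * Gamma (k + μ + 1) * 4 ^ k)

noncomputable def besselSeries (μ z : ℝ) : ℝ := ∑' k, besselCoeff μ k * z ^ k

section Bessel

variable {μ : ℝ}

lemma besselCoeff_succ_mul (hμ : -1 < μ) (k : ℕ) :
    besselCoeff μ (k + 1) * (4 * (k + 1) * (k + μ + 1)) = -besselCoeff μ k := by
  have hpos : 0 < (k : ℝ) + μ + 1 := by linarith [(k.cast_nonneg : (0 : ℝ) ≤ k)]
  have hΓ : Gamma ((k + 1 : ℕ) + μ + 1) = (k + μ + 1) * Gamma (k + μ + 1) := by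
    rw [← Gamma_add_one hpos.ne']
    push_cast
    ring_nf
  have := (Gamma_pos_of_pos hpos).ne'
  rw [besselCoeff, besselCoeff, hΓ, Nat.factorial_succ]
  push_cast
  field_simp
  ring

lemma summable_besselCoeff_mul_pow (hμ : -1 < μ) (z : ℝ) :
    Summable fun k => besselCoeff μ k * z ^ k := by
  refine summable_of_ratio_norm_eventually_le one_half_lt_one ?_
  filter_upwards [eventually_ge_atTop ⌈|z|⌉₊] with k hk
  have hkz : |z| ≤ k := Nat.ceil_le.1 hk
  have hbound : |z| ≤ 2 * (k + 1) * (k + μ + 1) := by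
    nlinarith [(k.cast_nonneg : (0 : ℝ) ≤ k)]
  have hQ : 0 < 4 * ((k : ℝ) + 1) * (k + μ + 1) := by
    have : 0 < (k : ℝ) + μ + 1 := by linarith [(k.cast_nonneg : (0 : ℝ) ≤ k)]
    positivity
  rw [← neg_neg (besselCoeff μ k), ← besselCoeff_succ_mul hμ, Real.norm_eq_abs, Real.norm_eq_abs,
    abs_mul, abs_mul, abs_neg, abs_mul, abs_pow, abs_pow, abs_of_pos hQ, pow_succ]
  have := mul_le_mul_of_nonneg_left hbound
    (mul_nonneg (abs_nonneg (besselCoeff μ (k + 1))) (pow_nonneg (abs_nonneg z) k))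
  linarith

lemma besselSeries_ode (hμ : -1 < μ) (z : ℝ) :
    z * ∑' n, derivCoeff (derivCoeff (besselCoeff μ)) n * z ^ n
      + (μ + 1) * ∑' n, derivCoeff (besselCoeff μ) n * z ^ n = -besselSeries μ z / 4 := by
  refine (hasSum_mul_tsum_derivCoeff_derivCoeff_add (summable_besselCoeff_mul_pow hμ)
    (μ + 1) z).unique ?_
  refine ((summable_besselCoeff_mul_pow hμ z).hasSum.neg.div_const 4).congr_fun fun n => ?_
  linear_combination (z ^ n / 4) * besselCoeff_succ_mul hμ n

lemma rpow_mul_besselJ (μ : ℝ) {x : ℝ} (hx : 0 < x) :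
    (2 / x) ^ μ * besselJ μ x = besselSeries μ (x ^ 2) := by
  rw [besselJ, besselSeries, ← tsum_mul_left]
  refine tsum_congr fun k => ?_
  have hx2 : 0 < x / 2 := by positivity
  have hcancel : (2 / x) ^ μ * (x / 2) ^ μ = 1 := by
    rw [← mul_rpow (by positivity) hx2.le, show 2 / x * (x / 2) = 1 by field_simp, one_rpow]
  have hpow : (x / 2) ^ (2 * (k : ℝ)) = (x ^ 2) ^ k / 4 ^ k := by
    rw [← Nat.cast_ofNat, ← Nat.cast_mul, rpow_natCast, pow_mul, div_pow, div_pow]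
    norm_num
  rw [rpow_add hx2, hpow, besselCoeff]
  linear_combination (-1) ^ k * ((x ^ 2) ^ k / 4 ^ k) / (k ! * Gamma (k + μ + 1)) * hcancel

end Bessel

lemma deriv_deriv_add_mul_deriv_comp_sq {h h₁ h₂ : ℝ → ℝ} {β : ℝ}
    (hh : ∀ z, HasDerivAt h (h₁ z) z) (hh₁ : ∀ z, HasDerivAt h₁ (h₂ z) z)
    (hode : ∀ z, z * h₂ z + β * h₁ z = -h z / 4) (a : ℝ) {t : ℝ} (ht : t ≠ 0) :
    deriv (deriv fun s => h ((a * s) ^ 2)) t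
      + ((2 * β - 1) / t) * deriv (fun s => h ((a * s) ^ 2)) t = -a ^ 2 * h ((a * t) ^ 2) := by
  have hsq (s : ℝ) : HasDerivAt (fun s => (a * s) ^ 2) (2 * a ^ 2 * s) s := by
    refine (((hasDerivAt_id' s).const_mul a).pow 2).congr_deriv ?_
    norm_num
    ring
  have hderiv : deriv (fun s => h ((a * s) ^ 2)) = fun s => h₁ ((a * s) ^ 2) * (2 * a ^ 2 * s) :=
    funext fun s => ((hh _).comp s (hsq s)).deriv
  have hderiv2 : HasDerivAt (fun s => h₁ ((a * s) ^ 2) * (2 * a ^ 2 * s))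
      (h₂ ((a * t) ^ 2) * (2 * a ^ 2 * t) * (2 * a ^ 2 * t)
        + h₁ ((a * t) ^ 2) * (2 * a ^ 2 * 1)) t :=
    ((hh₁ _).comp t (hsq t)).mul ((hasDerivAt_id' t).const_mul (2 * a ^ 2))
  rw [hderiv, hderiv2.deriv]
  linear_combination (4 * a ^ 2) * hode ((a * t) ^ 2)
    + ((2 * β - 1) * h₁ ((a * t) ^ 2) * (2 * a ^ 2)) * mul_inv_cancel₀ ht

theorem fractional_epd_fourier_ode_general (d : ℕ) (γ c ν : ℝ)
    (hγ : 0 < γ) (hc : 0 < c)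
    (ξ : EuclideanSpace ℝ (Fin d)) (hξ : ξ ≠ 0)
    (u : ℝ → ℝ)
    (hu : ∀ s : ℝ, u s =
      (2 / (c * s * ‖ξ‖ ^ (ν / 2))) ^ (γ + (d : ℝ) / 2 - 1) *
        Real.Gamma (γ + d / 2) *
        besselJ (γ + (d : ℝ) / 2 - 1) (c * s * ‖ξ‖ ^ (ν / 2)))
    (t : ℝ) (ht : 0 < t) :
    deriv (deriv u) t + ((d + 2 * γ - 1) / t) * deriv u t =
      -(c ^ 2) * ‖ξ‖ ^ ν * u t := by
  set μ := γ + (d : ℝ) / 2 - 1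
  have hμ : -1 < μ := by
    have : (0 : ℝ) ≤ d / 2 := by positivity
    simp only [μ]
    linarith
  have hb := summable_besselCoeff_mul_pow hμ
  have hξ' : 0 < ‖ξ‖ := norm_pos_iff.2 hξ
  set a := c * ‖ξ‖ ^ (ν / 2)
  have ha : 0 < a := mul_pos hc (rpow_pos_of_pos hξ' _)
  have ha2 : a ^ 2 = c ^ 2 * ‖ξ‖ ^ ν := by
    rw [mul_pow, ← rpow_natCast (‖ξ‖ ^ (ν / 2)), ← rpow_mul hξ'.le]
    norm_num
  set C := Gamma (γ + d / 2)
  have hu_eq : u =ᶠ[𝓝 t] fun s => C * besselSeries μ ((a * s) ^ 2) := by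
    filter_upwards [eventually_gt_nhds ht] with s hs
    rw [hu s, show c * s * ‖ξ‖ ^ (ν / 2) = a * s by ring, mul_right_comm,
      rpow_mul_besselJ μ (by positivity), mul_comm]
  have hode := deriv_deriv_add_mul_deriv_comp_sq (h := fun z => C * besselSeries μ z)
    (β := μ + 1) (fun z => (hasDerivAt_tsum_mul_pow hb z).const_mul C)
    (fun z => (hasDerivAt_tsum_mul_pow (summable_derivCoeff_mul_pow hb) z).const_mul C)
    (fun z => by linear_combination C * besselSeries_ode hμ z) a ht.ne'
  rw [hu_eq.deriv.deriv_eq, hu_eq.deriv_eq, hu_eq.eq_of_nhds, neg_mul, ← ha2,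
    show (d + 2 * γ - 1 : ℝ) = 2 * (μ + 1) - 1 by ring]
  exact hode

/-- The Fourier transform of the fundamental solution of the space-fractional
Euler–Poisson–Darboux equation satisfies, for each fixed frequency `ξ ≠ 0`,
the ODE `û'' + ((d+2γ-1)/t) û' = -c²‖ξ‖^ν û`. -/
theorem fractional_epd_fourier_ode (d : ℕ) (hd : 1 ≤ d) (γ c ν : ℝ)
    (hγ : 0 < γ) (hc : 0 < c) (hν : 0 < ν)
    (ξ : EuclideanSpace ℝ (Fin d)) (hξ : ξ ≠ 0)
    (u : ℝ → ℝ)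
    (hu : ∀ s : ℝ, u s =
      (2 / (c * s * ‖ξ‖ ^ (ν / 2))) ^ (γ + (d : ℝ) / 2 - 1) *
        Real.Gamma (γ + d / 2) *
        besselJ (γ + (d : ℝ) / 2 - 1) (c * s * ‖ξ‖ ^ (ν / 2)))
    (t : ℝ) (ht : 0 < t) :
    deriv (deriv u) t + ((d + 2 * γ - 1) / t) * deriv u t =
      -(c ^ 2) * ‖ξ‖ ^ ν * u t :=
  fractional_epd_fourier_ode_general d γ c ν hγ hc ξ hξ u hu t ht
end

section
/- For d ≥ 1, t > 0 and ξ ∈ ℝ^d, the Fourier transform of the Cauchy kernel equals e^{-t‖ξ‖}: ∫_{ℝ^d} e^{i⟨ξ,x⟩} (Γ((d+1)/2)/π^{(d+1)/2}) · t/(t² + ‖x‖²)^{(d+1)/2} dx = e^{-t‖ξ‖}. -/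
/-!
Subordination. The Cauchy kernel is a mixture `∫₀^∞ η_t(s) h_s(x) ds` of the heat kernels
`h_s(x) = (4πs)^{-d/2} e^{-‖x‖²/(4s)}` against the Lévy density
`η_t(s) = t (4π)^{-1/2} s^{-3/2} e^{-t²/(4s)}`; this is an inverse-Gamma integral in `s`.
Since `ĥ_s(ξ) = e^{-s‖ξ‖²}`, Fubini turns the Fourier transform of the Cauchy kernel into the
Laplace transform `∫₀^∞ η_t(s) e^{-s‖ξ‖²} ds`. The substitution `s = t²/(4u²)` reduces that to the
Cauchy–Schlömilch integral `∫₀^∞ e^{-(u - c/u)²} du = √π/2`, whose value comes from averaging over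
the involution `u ↦ c/u` and then substituting `y = u - c/u`, which maps `(0, ∞)` onto `ℝ`.
-/

open Real MeasureTheory Set

section Substitution

variable {E : Type*} [NormedAddCommGroup E] [NormedSpace ℝ E]

theorem integral_comp_div_Ioi (g : ℝ → E) {c : ℝ} (hc : 0 < c) :
    ∫ u in Ioi 0, (c / u ^ 2) • g (c / u) = ∫ s in Ioi 0, g s := by
  have hscale := integral_comp_mul_left_Ioi' g 0 hc
  rw [mul_zero] at hscale
  rw [← hscale, ← integral_comp_rpow_Ioi (fun y => g (c * y)) (by norm_num : (-1 : ℝ) ≠ 0),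
    ← integral_smul]
  refine setIntegral_congr_fun measurableSet_Ioi fun u (hu : 0 < u) => ?_
  rw [smul_smul, rpow_neg_one, show (-1 : ℝ) - 1 = -(2 : ℕ) by norm_num, rpow_neg hu.le,
    rpow_natCast, abs_neg, abs_one, one_mul, ← div_eq_mul_inv, ← div_eq_mul_inv]

theorem integral_comp_div_sq_Ioi (g : ℝ → E) {c : ℝ} (hc : 0 < c) :
    ∫ u in Ioi 0, (2 * c / u ^ 3) • g (c / u ^ 2) = ∫ s in Ioi 0, g s := by
  rw [← integral_comp_div_Ioi g hc,
    ← integral_comp_rpow_Ioi_of_pos (g := fun v => (c / v ^ 2) • g (c / v)) two_pos]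
  refine setIntegral_congr_fun measurableSet_Ioi fun u (hu : 0 < u) => ?_
  rw [smul_smul, rpow_two, show (2 : ℝ) - 1 = (1 : ℕ) by norm_num, rpow_natCast]
  congr 1
  field_simp

theorem integral_one_add_div_sq_smul_comp_sub_div (g : ℝ → E) {c : ℝ} (hc : 0 < c) :
    ∫ u in Ioi 0, (1 + c / u ^ 2) • g (u - c / u) = ∫ y, g y := by
  have hsurj : (fun u => u - c / u) '' Ioi 0 = univ := by
    refine eq_univ_of_forall fun y => ?_
    set D := √(y ^ 2 + 4 * c)
    have hD : D ^ 2 = y ^ 2 + 4 * c := sq_sqrt (by positivity)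
    have hyD : 0 < y + D := by
      have : |y| < D := by
        rw [← sqrt_sq_eq_abs]; exact sqrt_lt_sqrt (sq_nonneg y) (by linarith)
      linarith [neg_abs_le y]
    refine ⟨(y + D) / 2, by simpa using hyD, ?_⟩
    field_simp
    linear_combination hD
  have hderiv : ∀ u ∈ Ioi (0 : ℝ),
      HasDerivWithinAt (fun u => u - c / u) (1 + c / u ^ 2) (Ioi 0) u := by
    intro u (hu : 0 < u)
    have hinv : HasDerivAt (fun u => c / u) (-(c / u ^ 2)) u := by
      simpa [div_eq_mul_inv, mul_comm] using (hasDerivAt_inv hu.ne').const_mul c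
    simpa using ((hasDerivAt_id' u).fun_sub hinv).hasDerivWithinAt
  have hmono : StrictMonoOn (fun u => u - c / u) (Ioi 0) := fun a (ha : 0 < a) b _ hab => by
    have : c / b < c / a := div_lt_div_of_pos_left hc ha hab
    simp only; linarith
  calc ∫ u in Ioi 0, (1 + c / u ^ 2) • g (u - c / u)
      = ∫ u in Ioi 0, |1 + c / u ^ 2| • g (u - c / u) :=
        setIntegral_congr_fun measurableSet_Ioi fun u (hu : 0 < u) => by
          rw [abs_of_pos (by positivity)]
    _ = ∫ y in (fun u => u - c / u) '' Ioi 0, g y :=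
        (integral_image_eq_integral_abs_deriv_smul measurableSet_Ioi hderiv hmono.injOn g).symm
    _ = ∫ y, g y := by rw [hsurj, setIntegral_univ]

end Substitution

theorem integral_exp_neg_sq_sub_div {c : ℝ} (hc : 0 ≤ c) :
    ∫ u in Ioi 0, exp (-(u - c / u) ^ 2) = √π / 2 := by
  rcases hc.eq_or_lt with rfl | hc
  · simpa using integral_gaussian_Ioi 1
  set f := fun u : ℝ => exp (-(u - c / u) ^ 2)
  have hsym : ∫ u in Ioi 0, (c / u ^ 2) * f u = ∫ u in Ioi 0, f u := by
    rw [← integral_comp_div_Ioi f hc]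
    refine setIntegral_congr_fun measurableSet_Ioi fun u (hu : 0 < u) => ?_
    simp only [f, smul_eq_mul, div_div_cancel₀ hc.ne', ← neg_sub (c / u) u, neg_sq]
  have hsum : ∫ u in Ioi 0, (1 + c / u ^ 2) * f u = √π := by
    have := integral_gaussian 1
    simp only [neg_mul, one_mul, div_one] at this
    simpa [← this] using integral_one_add_div_sq_smul_comp_sub_div (fun y => exp (-y ^ 2)) hc
  have hint : IntegrableOn (fun u => (1 + c / u ^ 2) * f u) (Ioi 0) :=
    Integrable.of_integral_ne_zero (by rw [hsum]; positivity)
  have hf : IntegrableOn f (Ioi 0) := by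
    refine hint.mono' (by fun_prop) ?_
    filter_upwards [ae_restrict_mem measurableSet_Ioi] with u (hu : 0 < u)
    rw [norm_of_nonneg (exp_nonneg _)]
    exact le_mul_of_one_le_left (exp_nonneg _) (by simp only [le_add_iff_nonneg_right]; positivity)
  have hg : IntegrableOn (fun u => (c / u ^ 2) * f u) (Ioi 0) :=
    (hint.sub hf).congr_fun (fun u _ => by simp only [Pi.sub_apply]; ring) measurableSet_Ioi
  have hsplit : ∫ u in Ioi 0, (1 + c / u ^ 2) * f u
      = (∫ u in Ioi 0, f u) + ∫ u in Ioi 0, (c / u ^ 2) * f u := by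
    rw [← integral_add hf hg]; congr 1; ext u; ring
  rw [hsplit, hsym] at hsum
  linarith

noncomputable def levyDensity (t s : ℝ) : ℝ :=
  t / (2 * √π) * s ^ (-(3 / 2 : ℝ)) * exp (-(t ^ 2 / (4 * s)))

theorem integral_levyDensity_mul_exp {t a : ℝ} (ht : 0 < t) (ha : 0 ≤ a) :
    ∫ s in Ioi 0, levyDensity t s * exp (-(a ^ 2 * s)) = exp (-(t * a)) := by
  have hpt : ∀ u : ℝ, 0 < u →
      (2 * (t / 2) ^ 2 / u ^ 3) • (levyDensity t ((t / 2) ^ 2 / u ^ 2)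
        * exp (-(a ^ 2 * ((t / 2) ^ 2 / u ^ 2))))
        = 2 / √π * exp (-(t * a)) * exp (-(u - a * t / 2 / u) ^ 2) := by
    intro u hu
    have hrpow : ((t / 2) ^ 2 / u ^ 2) ^ (-(3 / 2 : ℝ)) = (u / (t / 2)) ^ 3 := by
      rw [← div_pow, ← rpow_natCast, ← rpow_mul (by positivity),
        show ((2 : ℕ) : ℝ) * -(3 / 2) = -(3 : ℕ) by norm_num, rpow_neg (by positivity),
        rpow_natCast, ← inv_pow, inv_div]
    rw [levyDensity, hrpow, smul_eq_mul, mul_assoc _ (exp _), ← exp_add, mul_assoc _ (exp _),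
      ← exp_add]
    have hπ : 0 < √π := sqrt_pos.mpr pi_pos
    field_simp
    congr 1
    ring
  rw [← integral_comp_div_sq_Ioi _ (by positivity : 0 < (t / 2) ^ 2),
    setIntegral_congr_fun measurableSet_Ioi hpt, integral_const_mul,
    integral_exp_neg_sq_sub_div (by positivity)]
  field_simp

theorem integral_levyDensity {t : ℝ} (ht : 0 < t) : ∫ s in Ioi 0, levyDensity t s = 1 := by
  simpa using integral_levyDensity_mul_exp ht le_rfl

theorem integrableOn_levyDensity {t : ℝ} (ht : 0 < t) : IntegrableOn (levyDensity t) (Ioi 0) :=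
  Integrable.of_integral_ne_zero (by rw [integral_levyDensity ht]; exact one_ne_zero)

theorem integral_rpow_neg_sub_one_mul_exp_neg_div {ν c : ℝ} (hν : 0 < ν) (hc : 0 < c) :
    ∫ s in Ioi 0, s ^ (-ν - 1) * exp (-(c / s)) = Gamma ν / c ^ ν := by
  have hpt : ∀ u : ℝ, 0 < u → (c / u ^ 2) • ((c / u) ^ (-ν - 1) * exp (-(c / (c / u))))
      = (c ^ ν)⁻¹ * (u ^ (ν - 1) * exp (-(1 * u))) := by
    intro u hu
    rw [show -ν - 1 = -((ν - 1) + (2 : ℕ)) by push_cast; ring, rpow_neg (by positivity),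
      ← inv_rpow (by positivity), inv_div, rpow_add (by positivity), rpow_natCast,
      div_rpow hu.le hc.le, div_div_cancel₀ hc.ne', rpow_sub_one hc.ne', smul_eq_mul, one_mul]
    field_simp
  rw [← integral_comp_div_Ioi _ hc, setIntegral_congr_fun measurableSet_Ioi hpt,
    integral_const_mul, integral_rpow_mul_exp_neg_mul_Ioi hν one_pos]
  simp [div_eq_inv_mul]

section Kernels

open Module

variable {V : Type*} [NormedAddCommGroup V] [InnerProductSpace ℝ V]

noncomputable def heatKernel (s : ℝ) (x : V) : ℝ :=
  (4 * π * s) ^ (-(finrank ℝ V : ℝ) / 2) * exp (-(‖x‖ ^ 2 / (4 * s)))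

noncomputable def cauchyKernel (t : ℝ) (x : V) : ℝ :=
  Gamma (((finrank ℝ V : ℝ) + 1) / 2) / π ^ (((finrank ℝ V : ℝ) + 1) / 2) *
    (t / (t ^ 2 + ‖x‖ ^ 2) ^ (((finrank ℝ V : ℝ) + 1) / 2))

theorem four_mul_pi_rpow_add_one_div_two (n : ℝ) :
    (4 * π) ^ ((n + 1) / 2) = 2 * √π * (4 * π) ^ (n / 2) := by
  have h4 : √4 = 2 := by rw [show (4 : ℝ) = 2 ^ 2 by norm_num, sqrt_sq two_pos.le]
  rw [show (n + 1) / 2 = 1 / 2 + n / 2 by ring, rpow_add (by positivity), ← sqrt_eq_rpow,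
    sqrt_mul (by norm_num), h4]

theorem cauchyKernel_eq_integral_levyDensity_mul_heatKernel {t : ℝ} (ht : 0 < t) (x : V) :
    cauchyKernel t x = ∫ s in Ioi 0, levyDensity t s * heatKernel s x := by
  rw [cauchyKernel]
  set n : ℝ := (finrank ℝ V : ℝ)
  set ν := (n + 1) / 2
  set C := t ^ 2 + ‖x‖ ^ 2
  have hC : 0 < C := by positivity
  have hpt : ∀ s : ℝ, 0 < s → levyDensity t s * heatKernel s x
      = t / (2 * √π) * (4 * π) ^ (-n / 2) * (s ^ (-ν - 1) * exp (-(C / 4 / s))) := by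
    intro s hs
    rw [levyDensity, heatKernel, mul_rpow (by positivity) hs.le,
      show -ν - 1 = -(3 / 2) + -n / 2 by ring, rpow_add hs]
    have hexp :
        exp (-(C / 4 / s)) = exp (-(t ^ 2 / (4 * s))) * exp (-(‖x‖ ^ 2 / (4 * s))) := by
      rw [← exp_add]; congr 1; field_simp; ring
    rw [hexp]
    ring
  rw [setIntegral_congr_fun measurableSet_Ioi hpt, integral_const_mul,
    integral_rpow_neg_sub_one_mul_exp_neg_div (by positivity) (by positivity),
    div_rpow hC.le (by norm_num), neg_div, rpow_neg (by positivity)]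
  have h4π := four_mul_pi_rpow_add_one_div_two n
  rw [mul_rpow (by norm_num) pi_pos.le] at h4π
  field_simp
  linear_combination (-Gamma ν) * h4π

end Kernels

section Fourier

open Module Complex

variable {V : Type*} [NormedAddCommGroup V] [InnerProductSpace ℝ V]

theorem cexp_inner_mul_heatKernel (s : ℝ) (ξ x : V) :
    cexp (I * ((inner ℝ ξ x : ℝ) : ℂ)) * (heatKernel s x : ℂ)
      = ((4 * π * s) ^ (-(finrank ℝ V : ℝ) / 2) : ℝ)
        * cexp (-(((4 * s)⁻¹ : ℝ) : ℂ) * ‖x‖ ^ 2 + I * ((inner ℝ ξ x : ℝ) : ℂ)) := by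
  rw [heatKernel, ofReal_mul, ofReal_exp, Complex.exp_add]
  push_cast
  ring_nf

variable [FiniteDimensional ℝ V] [MeasurableSpace V] [BorelSpace V]

theorem integrable_cexp_inner_mul_heatKernel {s : ℝ} (hs : 0 < s) (ξ : V) :
    Integrable fun x : V => cexp (I * ((inner ℝ ξ x : ℝ) : ℂ)) * (heatKernel s x : ℂ) := by
  have hb : 0 < (((4 * s)⁻¹ : ℝ) : ℂ).re := by rw [ofReal_re]; positivity
  simp_rw [cexp_inner_mul_heatKernel]
  exact (GaussianFourier.integrable_cexp_neg_mul_sq_norm_add hb I ξ).const_mul _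

theorem integral_cexp_inner_mul_heatKernel {s : ℝ} (hs : 0 < s) (ξ : V) :
    ∫ x : V, cexp (I * ((inner ℝ ξ x : ℝ) : ℂ)) * (heatKernel s x : ℂ)
      = ((Real.exp (-(‖ξ‖ ^ 2 * s)) : ℝ) : ℂ) := by
  have hb : 0 < (((4 * s)⁻¹ : ℝ) : ℂ).re := by rw [ofReal_re]; positivity
  simp_rw [cexp_inner_mul_heatKernel]
  rw [integral_const_mul, GaussianFourier.integral_cexp_neg_mul_sq_norm_add hb]
  have hvar : (π : ℂ) / (((4 * s)⁻¹ : ℝ) : ℂ) = ((4 * π * s : ℝ) : ℂ) := by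
    push_cast; field_simp
  have hexp : I ^ 2 * (‖ξ‖ : ℂ) ^ 2 / (4 * (((4 * s)⁻¹ : ℝ) : ℂ))
      = ((-(‖ξ‖ ^ 2 * s) : ℝ) : ℂ) := by
    push_cast; rw [I_sq]; field_simp
  have hdim : (finrank ℝ V : ℂ) / 2 = (((finrank ℝ V : ℝ) / 2 : ℝ) : ℂ) := by push_cast; rfl
  rw [hvar, hexp, hdim, ← ofReal_cpow (by positivity), ← ofReal_exp, ← mul_assoc,
    ← ofReal_mul, neg_div, rpow_neg (by positivity), inv_mul_cancel₀ (by positivity), ofReal_one,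
    one_mul]

theorem integral_heatKernel {s : ℝ} (hs : 0 < s) : ∫ x : V, heatKernel s x = 1 := by
  have := integral_cexp_inner_mul_heatKernel hs (0 : V)
  simp only [inner_zero_left, ofReal_zero, mul_zero, Complex.exp_zero, one_mul, norm_zero,
    zero_pow two_ne_zero, zero_mul, neg_zero, Real.exp_zero, ofReal_one] at this
  exact_mod_cast this

theorem integrable_levyDensity_mul_cexp_inner_mul_heatKernel {t : ℝ} (ht : 0 < t) (ξ : V) :
    Integrable (Function.uncurry fun (x : V) (s : ℝ) =>
        (levyDensity t s : ℂ) * (cexp (I * ((inner ℝ ξ x : ℝ) : ℂ)) * (heatKernel s x : ℂ)))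
      ((volume : Measure V).prod (volume.restrict (Ioi 0))) := by
  refine (integrable_prod_iff' ?_).2 ⟨?_, ?_⟩
  · unfold levyDensity heatKernel
    fun_prop
  · filter_upwards [ae_restrict_mem measurableSet_Ioi] with s (hs : 0 < s)
    exact (integrable_cexp_inner_mul_heatKernel hs ξ).const_mul (levyDensity t s : ℂ)
  · refine (integrableOn_levyDensity ht).congr_fun (fun s (hs : 0 < s) => ?_) measurableSet_Ioi
    have hnorm : ∀ x : V,
        ‖(levyDensity t s : ℂ) * (cexp (I * ((inner ℝ ξ x : ℝ) : ℂ)) * (heatKernel s x : ℂ))‖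
          = levyDensity t s * heatKernel s x := by
      intro x
      rw [norm_mul, norm_mul, norm_exp_I_mul_ofReal, one_mul, norm_real, norm_real,
        norm_of_nonneg (by unfold levyDensity; positivity),
        norm_of_nonneg (by unfold heatKernel; positivity)]
    simp only [Function.uncurry_apply_pair, hnorm]
    rw [integral_const_mul, integral_heatKernel hs, mul_one]

theorem integral_cexp_inner_mul_cauchyKernel {t : ℝ} (ht : 0 < t) (ξ : V) :
    ∫ x : V, cexp (I * ((inner ℝ ξ x : ℝ) : ℂ)) * (cauchyKernel t x : ℂ)
      = cexp (-(t * ‖ξ‖) : ℝ) :=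
  calc ∫ x : V, cexp (I * ((inner ℝ ξ x : ℝ) : ℂ)) * (cauchyKernel t x : ℂ)
      = ∫ x : V, ∫ s in Ioi 0,
          (levyDensity t s : ℂ) * (cexp (I * ((inner ℝ ξ x : ℝ) : ℂ)) * (heatKernel s x : ℂ)) := by
        congr 1; ext x
        rw [cauchyKernel_eq_integral_levyDensity_mul_heatKernel ht, ← integral_complex_ofReal,
          ← integral_const_mul]
        congr 1; ext s
        push_cast; ring
    _ = ∫ s in Ioi 0, ∫ x : V,
          (levyDensity t s : ℂ) * (cexp (I * ((inner ℝ ξ x : ℝ) : ℂ)) * (heatKernel s x : ℂ)) :=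
        integral_integral_swap (integrable_levyDensity_mul_cexp_inner_mul_heatKernel ht ξ)
    _ = ∫ s in Ioi 0, ((levyDensity t s * Real.exp (-(‖ξ‖ ^ 2 * s)) : ℝ) : ℂ) := by
        refine setIntegral_congr_fun measurableSet_Ioi fun s (hs : 0 < s) => ?_
        rw [integral_const_mul, integral_cexp_inner_mul_heatKernel hs, ofReal_mul]
    _ = cexp (-(t * ‖ξ‖) : ℝ) := by
        rw [integral_complex_ofReal, integral_levyDensity_mul_exp ht (norm_nonneg ξ), ofReal_exp]

end Fourier

theorem cauchy_kernel_fourier_transform_general (d : ℕ) (t : ℝ)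
    (ht : 0 < t) (ξ : EuclideanSpace ℝ (Fin d)) :
    ∫ x : EuclideanSpace ℝ (Fin d),
        Complex.exp (Complex.I * ((inner ℝ ξ x : ℝ) : ℂ)) *
          ((Real.Gamma (((d : ℝ) + 1) / 2) / Real.pi ^ (((d : ℝ) + 1) / 2) *
            (t / (t ^ 2 + ‖x‖ ^ 2) ^ (((d : ℝ) + 1) / 2)) : ℝ) : ℂ) =
      Complex.exp (-(t * ‖ξ‖) : ℝ) := by
  simpa only [cauchyKernel, finrank_euclideanSpace_fin] using
    integral_cexp_inner_mul_cauchyKernel ht ξ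

/-- The Fourier transform of the `d`-dimensional Cauchy (Poisson) kernel equals
`e^{-t‖ξ‖}`. -/
theorem cauchy_kernel_fourier_transform (d : ℕ) (hd : 1 ≤ d) (t : ℝ)
    (ht : 0 < t) (ξ : EuclideanSpace ℝ (Fin d)) :
    ∫ x : EuclideanSpace ℝ (Fin d),
        Complex.exp (Complex.I * ((inner ℝ ξ x : ℝ) : ℂ)) *
          ((Real.Gamma (((d : ℝ) + 1) / 2) / Real.pi ^ (((d : ℝ) + 1) / 2) *
            (t / (t ^ 2 + ‖x‖ ^ 2) ^ (((d : ℝ) + 1) / 2)) : ℝ) : ℂ) =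
      Complex.exp (-(t * ‖ξ‖) : ℝ) :=
  cauchy_kernel_fourier_transform_general d t ht ξ
end
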